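/- Let p ∈ Hol(Δ,ℂ) with Re p(z) ≥ 0 for all z ∈ Δ admit the representation p(z) = a·(1+z)/(1−z) + b + γ(z), where ∠lim_{z→1} γ(z)/(z−1) = 0. Then: (i) a = δ_p(1)/2 ≥ 0, where δ_p(1) = ∠lim_{z→1}(1−z)p(z) is the charge of p at 1; (ii) γ ≡ 0 on Δ if and only if Re p(z) ≥ Re b ≥ 0 for all z ∈ Δ. -/

import Mathlib

open Complex Filter Set Metric ComplexConjugate

noncomputable section

/-- The open unit disk in ℂ. -/
def unitDisk : Set ℂ := {z : ℂ | ‖z‖ < 1}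

/-- Stolz angle (nontangential approach region) with vertex `ζ` and aperture `k`. -/
def stolzAngle (ζ : ℂ) (k : ℝ) : Set ℂ :=
  {z : ℂ | z ∈ unitDisk ∧ ‖z - ζ‖ < k * (1 - ‖z‖)}

/-- Angular (nontangential) limit of `g` at the boundary point `ζ` equals `L`:
the limit of `g` within every Stolz angle with vertex `ζ`. -/
def AngularLimAt (g : ℂ → ℂ) (ζ L : ℂ) : Prop :=
  ∀ k : ℝ, 1 < k → Filter.Tendsto g (nhdsWithin ζ (stolzAngle ζ k)) (nhds L)

/-- `g` belongs to `C_A^3(1)` with angular boundary values `a0 = g(1)`, `a1 = g'(1)`,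
`a2 = g''(1)`, `a3 = g'''(1)`: the remainder of the third order Taylor expansion at `1`
is `o((z-1)^3)` angularly. -/
def CA3At1 (g : ℂ → ℂ) (a0 a1 a2 a3 : ℂ) : Prop :=
  AngularLimAt (fun z =>
    (g z - (a0 + a1 * (z - 1) + a2 / 2 * (z - 1) ^ 2 + a3 / 6 * (z - 1) ^ 3)) / (z - 1) ^ 3) 1 0

/-- Holomorphic self-mapping of the unit disk. -/
def HolSelfMap (F : ℂ → ℂ) : Prop :=
  DifferentiableOn ℂ F unitDisk ∧ Set.MapsTo F unitDisk unitDisk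

/-- `F` is a linear fractional transformation on the unit disk. -/
def IsLFTOn (F : ℂ → ℂ) : Prop :=
  ∃ a b c d : ℂ, a * d - b * c ≠ 0 ∧ ∀ z ∈ unitDisk, F z = (a * z + b) / (c * z + d)

/-- `F` is a (holomorphic) automorphism of the unit disk. -/
def IsAutomorphismOfDisk (F : ℂ → ℂ) : Prop :=
  HolSelfMap F ∧ ∃ G : ℂ → ℂ, HolSelfMap G ∧
    (∀ z ∈ unitDisk, G (F z) = z) ∧ (∀ z ∈ unitDisk, F (G z) = z)

/-- The horocycle `D(1,k)` internally tangent to the unit circle at 1. -/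
def horocycle (k : ℝ) : Set ℂ :=
  {z : ℂ | z ∈ unitDisk ∧ ‖1 - z‖ ^ 2 / (1 - ‖z‖ ^ 2) < k}

/-- `τ` is the Denjoy–Wolff point of `F`: the iterates converge pointwise to `τ`. -/
def IsDenjoyWolffPt (F : ℂ → ℂ) (τ : ℂ) : Prop :=
  ∀ z ∈ unitDisk, Filter.Tendsto (fun n : ℕ => F^[n] z) Filter.atTop (nhds τ)

/-- A one-parameter continuous semigroup of holomorphic self-mappings of the disk. -/
def IsSemigroupOnDisk (S : ℝ → ℂ → ℂ) : Prop :=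
  (∀ t : ℝ, 0 ≤ t → HolSelfMap (S t)) ∧
  (∀ t : ℝ, 0 ≤ t → ∀ s : ℝ, 0 ≤ s → ∀ z ∈ unitDisk, S (t + s) z = S t (S s z)) ∧
  (∀ z ∈ unitDisk, Filter.Tendsto (fun t : ℝ => S t z) (nhdsWithin 0 (Set.Ioi 0)) (nhds z))

/-- `f` is the infinitesimal generator of the semigroup `S`. -/
def Generates (f : ℂ → ℂ) (S : ℝ → ℂ → ℂ) : Prop :=
  IsSemigroupOnDisk S ∧
  ∀ z ∈ unitDisk,
    Filter.Tendsto (fun t : ℝ => (z - S t z) / (t : ℂ)) (nhdsWithin 0 (Set.Ioi 0)) (nhds (f z))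

/-- `f` belongs to the class `G(Δ)` of infinitesimal generators on the disk. -/
def IsGenerator (f : ℂ → ℂ) : Prop :=
  DifferentiableOn ℂ f unitDisk ∧ ∃ S : ℝ → ℂ → ℂ, Generates f S

/-- `f` generates a one-parameter group of automorphisms of the disk
(equivalently, both `f` and `-f` are generators). -/
def GeneratesGroupOfAutomorphisms (f : ℂ → ℂ) : Prop :=
  IsGenerator f ∧ IsGenerator (fun z => -f z)

/-- Hyperbolic automorphism of the disk: an automorphism with boundary Denjoy–Wolff point `τ`
and angular derivative `0 < F'(τ) < 1`. -/
def IsHyperbolicAut (F : ℂ → ℂ) : Prop :=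
  IsAutomorphismOfDisk F ∧ ∃ τ : ℂ, ‖τ‖ = 1 ∧ IsDenjoyWolffPt F τ ∧
    ∃ α : ℝ, 0 < α ∧ α < 1 ∧ AngularLimAt (fun z => (F z - τ) / (z - τ)) τ (α : ℂ)

/-- Parabolic automorphism of the disk: an automorphism with boundary Denjoy–Wolff point `τ`
and angular derivative `F'(τ) = 1`. -/
def IsParabolicAut (F : ℂ → ℂ) : Prop :=
  IsAutomorphismOfDisk F ∧ ∃ τ : ℂ, ‖τ‖ = 1 ∧ IsDenjoyWolffPt F τ ∧
    AngularLimAt (fun z => (F z - τ) / (z - τ)) τ 1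

/-!
For (i): along a ray `t ↦ 1 - t * w` with `0 < Re w`, which stays in a Stolz angle at `1`,
`conj w * (1 - z) * p z = t * |w|² * p z` has nonnegative real part. Hence the charge `L = 2a`
satisfies `0 ≤ Re (conj w * L)` for all such `w`, which forces `L` to be a nonnegative real.

For (ii), everything rests on the Schwarz–Pick lemma for holomorphic maps into the closed right
half-plane, in the form
`(1 - |z|²)(1 - |w|²) |h z + conj (h w)|² ≤ 4 Re (h z) Re (h w) |1 - conj w * z|²`.
Letting `w = 1 - t → 1` with `t * h (1 - t) → 2A` gives Julia's inequality
`A Re ((1 + z) / (1 - z)) ≤ Re (h z)`; applied to `h = p - b` it shows `0 ≤ Re γ`.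
Letting instead `h (1 - t) / t → 0` forces `h = 0`, which applied to `γ` gives `γ ≡ 0`.
-/

open scoped Topology

lemma unitDisk_eq_ball : unitDisk = ball (0 : ℂ) 1 := by
  ext z; simp [unitDisk]

lemma mem_unitDisk_iff_normSq_lt_one {z : ℂ} : z ∈ unitDisk ↔ normSq z < 1 := by
  rw [← Complex.sq_norm, sq_lt_one_iff₀ (norm_nonneg z)]
  rfl

lemma ne_of_mem_unitDisk {z : ℂ} (hz : z ∈ unitDisk) : z ≠ 1 := by
  rintro rfl; simp [unitDisk] at hz

lemma one_sub_ofReal_mem_unitDisk {t : ℝ} (ht : t ∈ Ioo 0 1) : 1 - (t : ℂ) ∈ unitDisk := by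
  rw [unitDisk, mem_ofPred_eq, ← ofReal_one, ← ofReal_sub, norm_real, Real.norm_eq_abs,
    abs_lt]
  constructor <;> linarith [ht.1, ht.2]

lemma eventually_mem_Ioo_zero_one : ∀ᶠ t : ℝ in 𝓝[>] 0, t ∈ Ioo 0 1 :=
  Ioo_mem_nhdsGT one_pos

lemma re_one_add_div_one_sub (z : ℂ) :
    ((1 + z) / (1 - z)).re = (1 - normSq z) / normSq (1 - z) := by
  rw [div_re]
  simp only [add_re, add_im, sub_re, sub_im, one_re, one_im, normSq_apply]
  ring

lemma re_one_add_div_one_sub_nonneg {z : ℂ} (hz : z ∈ unitDisk) : 0 ≤ ((1 + z) / (1 - z)).re := by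
  rw [re_one_add_div_one_sub]
  rw [mem_unitDisk_iff_normSq_lt_one] at hz
  exact div_nonneg (by linarith) (normSq_nonneg _)

lemma normSq_one_sub_conj_mul_sub_normSq_sub (z w : ℂ) :
    normSq (1 - conj w * z) - normSq (z - w) = (1 - normSq w) * (1 - normSq z) := by
  simp only [normSq_apply, sub_re, sub_im, mul_re, mul_im, conj_re, conj_im, one_re, one_im]
  ring

lemma one_sub_conj_mul_ne_zero {w z : ℂ} (hw : w ∈ unitDisk) (hz : z ∈ unitDisk) :
    1 - conj w * z ≠ 0 := by
  rw [mem_unitDisk_iff_normSq_lt_one] at hw hz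
  intro h
  have := normSq_one_sub_conj_mul_sub_normSq_sub z w
  rw [h, map_zero] at this
  nlinarith [normSq_nonneg (z - w)]

def diskMobius (c z : ℂ) : ℂ := (z - c) / (1 - conj c * z)

section diskMobius

variable {c z : ℂ}

lemma one_sub_normSq_diskMobius (hc : c ∈ unitDisk) (hz : z ∈ unitDisk) :
    1 - normSq (diskMobius c z) = (1 - normSq c) * (1 - normSq z) / normSq (1 - conj c * z) := by
  have hN : normSq (1 - conj c * z) ≠ 0 := normSq_eq_zero.not.2 (one_sub_conj_mul_ne_zero hc hz)
  rw [diskMobius, normSq_div, eq_div_iff hN, sub_mul, div_mul_cancel₀ _ hN, one_mul,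
    normSq_one_sub_conj_mul_sub_normSq_sub]

lemma diskMobius_mem_unitDisk (hc : c ∈ unitDisk) (hz : z ∈ unitDisk) :
    diskMobius c z ∈ unitDisk := by
  have hN := normSq_pos.2 (one_sub_conj_mul_ne_zero hc hz)
  rw [mem_unitDisk_iff_normSq_lt_one, ← sub_pos, one_sub_normSq_diskMobius hc hz]
  rw [mem_unitDisk_iff_normSq_lt_one] at hc hz
  exact div_pos (mul_pos (sub_pos.2 hc) (sub_pos.2 hz)) hN

lemma diskMobius_self (c : ℂ) : diskMobius c c = 0 := by simp [diskMobius]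

lemma diskMobius_neg_diskMobius (hc : c ∈ unitDisk) (hz : z ∈ unitDisk) :
    diskMobius (-c) (diskMobius c z) = z := by
  have hN := one_sub_conj_mul_ne_zero hc hz
  have hc' : (1 - normSq c : ℂ) ≠ 0 := by
    rw [mem_unitDisk_iff_normSq_lt_one] at hc
    exact_mod_cast (sub_pos.2 hc).ne'
  have hden : 1 - conj (-c) * diskMobius c z = (1 - normSq c) / (1 - conj c * z) := by
    rw [diskMobius, normSq_eq_conj_mul_self, map_neg]; field_simp; ring
  rw [diskMobius, hden, div_div_eq_mul_div, diskMobius, div_sub' hN, div_mul_cancel₀ _ hN,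
    div_eq_iff hc', normSq_eq_conj_mul_self]
  ring

lemma differentiableOn_diskMobius (hc : c ∈ unitDisk) :
    DifferentiableOn ℂ (diskMobius c) unitDisk :=
  (differentiableOn_id.sub_const c).div (by fun_prop)
    fun _ hz => one_sub_conj_mul_ne_zero hc hz

end diskMobius

theorem norm_diskMobius_le_of_mapsTo {f : ℂ → ℂ} (hf : DifferentiableOn ℂ f unitDisk)
    (hmaps : MapsTo f unitDisk unitDisk) {z w : ℂ} (hz : z ∈ unitDisk) (hw : w ∈ unitDisk) :
    ‖diskMobius (f w) (f z)‖ ≤ ‖diskMobius w z‖ := by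
  have hw' : -w ∈ unitDisk := by simpa [unitDisk] using hw
  set g := diskMobius (f w) ∘ f ∘ diskMobius (-w)
  have hmaps_g : MapsTo g unitDisk unitDisk := fun ζ hζ =>
    diskMobius_mem_unitDisk (hmaps hw) (hmaps (diskMobius_mem_unitDisk hw' hζ))
  have hg : DifferentiableOn ℂ g unitDisk :=
    (differentiableOn_diskMobius (hmaps hw)).comp
      (hf.comp (differentiableOn_diskMobius hw') fun _ hζ => diskMobius_mem_unitDisk hw' hζ)
      fun _ hζ => hmaps (diskMobius_mem_unitDisk hw' hζ)
  have hg0 : g 0 = 0 := by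
    have : diskMobius (-w) 0 = w := by simp [diskMobius]
    simp only [g, Function.comp_apply, this, diskMobius_self]
  have hgz : g (diskMobius w z) = diskMobius (f w) (f z) := by
    simp [g, diskMobius_neg_diskMobius hw hz]
  rw [← hgz]
  rw [unitDisk_eq_ball] at hmaps_g hg
  exact Complex.norm_le_norm_of_mapsTo_ball hg (hmaps_g.mono_right ball_subset_closedBall) hg0
    (mem_ball_zero_iff.1 (unitDisk_eq_ball ▸ diskMobius_mem_unitDisk hw hz))

theorem schwarzPick {f : ℂ → ℂ} (hf : DifferentiableOn ℂ f unitDisk)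
    (hmaps : MapsTo f unitDisk unitDisk) {z w : ℂ} (hz : z ∈ unitDisk) (hw : w ∈ unitDisk) :
    (1 - normSq w) * (1 - normSq z) / normSq (1 - conj w * z) ≤
      (1 - normSq (f w)) * (1 - normSq (f z)) / normSq (1 - conj (f w) * f z) := by
  rw [← one_sub_normSq_diskMobius hw hz, ← one_sub_normSq_diskMobius (hmaps hw) (hmaps hz),
    ← Complex.sq_norm, ← Complex.sq_norm]
  gcongr
  exact norm_diskMobius_le_of_mapsTo hf hmaps hz hw

lemma add_one_ne_zero_of_re_pos {u : ℂ} (hu : 0 < u.re) : u + 1 ≠ 0 := fun h => by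
  have := congrArg re h
  rw [add_re, one_re, zero_re] at this
  linarith

def cayley (u : ℂ) : ℂ := (u - 1) / (u + 1)

section cayley

variable {u v : ℂ}

lemma one_sub_normSq_cayley (hu : u + 1 ≠ 0) :
    1 - normSq (cayley u) = 4 * u.re / normSq (u + 1) := by
  have hN : normSq (u + 1) ≠ 0 := normSq_eq_zero.not.2 hu
  rw [cayley, normSq_div, eq_div_iff hN, sub_mul, div_mul_cancel₀ _ hN]
  simp only [normSq_apply, add_re, add_im, sub_re, sub_im, one_re, one_im]
  ring

lemma one_sub_conj_cayley_mul_cayley (hu : u + 1 ≠ 0) (hv : v + 1 ≠ 0) :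
    1 - conj (cayley v) * cayley u = 2 * (u + conj v) / ((conj v + 1) * (u + 1)) := by
  have hv' : conj v + 1 ≠ 0 := by rwa [← map_one (starRingEnd ℂ), ← map_add, map_ne_zero]
  simp only [cayley, map_div₀, map_sub, map_add, map_one]
  field_simp
  ring

lemma cayley_mem_unitDisk (hu : 0 < u.re) : cayley u ∈ unitDisk := by
  have hu1 := add_one_ne_zero_of_re_pos hu
  rw [mem_unitDisk_iff_normSq_lt_one, ← sub_pos, one_sub_normSq_cayley hu1]
  exact div_pos (by linarith) (normSq_pos.2 hu1)

end cayley

theorem schwarzPick_rightHalfPlane {h : ℂ → ℂ} (hh : DifferentiableOn ℂ h unitDisk)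
    (hre : ∀ z ∈ unitDisk, 0 < (h z).re) {z w : ℂ} (hz : z ∈ unitDisk) (hw : w ∈ unitDisk) :
    (1 - normSq w) * (1 - normSq z) * normSq (h z + conj (h w)) ≤
      4 * (h z).re * (h w).re * normSq (1 - conj w * z) := by
  have h1 : ∀ ζ ∈ unitDisk, h ζ + 1 ≠ 0 := fun ζ hζ => add_one_ne_zero_of_re_pos (hre ζ hζ)
  have hpick := schwarzPick (f := cayley ∘ h) ((hh.sub_const 1).div (hh.add_const 1) h1)
    (fun ζ hζ => cayley_mem_unitDisk (hre ζ hζ)) hz hw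
  have hS : 0 < normSq (h z + conj (h w)) := normSq_pos.2 fun h0 => by
    have := congrArg re h0
    simp only [add_re, conj_re, zero_re] at this
    linarith [hre z hz, hre w hw]
  have hconj : conj (h w) + 1 = conj (h w + 1) := by simp
  have hrhs : (1 - normSq (cayley (h w))) * (1 - normSq (cayley (h z))) /
      normSq (1 - conj (cayley (h w)) * cayley (h z)) =
        4 * (h z).re * (h w).re / normSq (h z + conj (h w)) := by
    have hnz := normSq_pos.2 (h1 z hz)
    have hnw := normSq_pos.2 (h1 w hw)
    rw [one_sub_normSq_cayley (h1 z hz), one_sub_normSq_cayley (h1 w hw),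
      one_sub_conj_cayley_mul_cayley (h1 z hz) (h1 w hw), hconj, normSq_div, normSq_mul,
      normSq_mul, normSq_conj, normSq_ofNat]
    field_simp
    ring
  simp only [Function.comp_apply, hrhs] at hpick
  rwa [div_le_div_iff₀ (normSq_pos.2 (one_sub_conj_mul_ne_zero hw hz)) hS] at hpick

theorem schwarzPick_rightHalfPlane_of_re_nonneg {h : ℂ → ℂ} (hh : DifferentiableOn ℂ h unitDisk)
    (hre : ∀ z ∈ unitDisk, 0 ≤ (h z).re) {z w : ℂ} (hz : z ∈ unitDisk) (hw : w ∈ unitDisk) :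
    (1 - normSq w) * (1 - normSq z) * normSq (h z + conj (h w)) ≤
      4 * (h z).re * (h w).re * normSq (1 - conj w * z) := by
  have hε : ∀ ε : ℝ, 0 < ε →
      (1 - normSq w) * (1 - normSq z) * normSq (h z + ε + conj (h w + ε)) ≤
        4 * (h z + ε).re * (h w + ε).re * normSq (1 - conj w * z) := fun ε hε =>
    schwarzPick_rightHalfPlane (h := fun ζ => h ζ + ε) (hh.add_const _)
      (fun ζ hζ => by simp only [add_re, ofReal_re]; linarith [hre ζ hζ]) hz hw
  refine le_of_tendsto_of_tendsto (b := 𝓝[>] (0 : ℝ)) ?_ ?_ (eventually_nhdsWithin_of_forall hε)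
  · refine tendsto_nhdsWithin_of_tendsto_nhds ((Continuous.tendsto' ?_ 0 _ (by simp)))
    exact continuous_const.mul (continuous_normSq.comp (by fun_prop))
  · refine tendsto_nhdsWithin_of_tendsto_nhds ((Continuous.tendsto' ?_ 0 _ (by simp)))
    fun_prop

section radial

variable {h : ℂ → ℂ} {z : ℂ}

lemma schwarzPick_rightHalfPlane_radial (hh : DifferentiableOn ℂ h unitDisk)
    (hre : ∀ z ∈ unitDisk, 0 ≤ (h z).re) (hz : z ∈ unitDisk) {t : ℝ} (ht : t ∈ Ioo 0 1) :
    t * (2 - t) * (1 - normSq z) * normSq (h z + conj (h (1 - t))) ≤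
      4 * (h z).re * (h (1 - t)).re * normSq (1 - (1 - t) * z) := by
  have hpick := schwarzPick_rightHalfPlane_of_re_nonneg hh hre hz (one_sub_ofReal_mem_unitDisk ht)
  have hconj : conj (1 - (t : ℂ)) = 1 - t := by simp
  have hnormSq : normSq (1 - (t : ℂ)) = (1 - t) ^ 2 := by
    rw [← ofReal_one, ← ofReal_sub, normSq_ofReal, sq]
  rw [hconj, hnormSq] at hpick
  linarith

theorem le_re_of_tendsto_mul_radial (hh : DifferentiableOn ℂ h unitDisk)
    (hre : ∀ z ∈ unitDisk, 0 ≤ (h z).re) (hz : z ∈ unitDisk) {A : ℝ}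
    (hA : Tendsto (fun t : ℝ => t * h (1 - t)) (𝓝[>] 0) (𝓝 (2 * (A : ℂ)))) :
    A * ((1 + z) / (1 - z)).re ≤ (h z).re := by
  -- the radial Schwarz–Pick inequality times `t`, as a continuous function of `(t, t * h (1 - t))`
  set F : ℝ × ℂ → ℝ := fun q => 4 * (h z).re * q.2.re * normSq (1 - (1 - q.1) * z) -
    (2 - q.1) * (1 - normSq z) * normSq (q.1 * h z + conj q.2)
  have hF : Continuous F := by
    refine .sub (.mul (by fun_prop) (continuous_normSq.comp (by fun_prop)))
      (.mul (by fun_prop) (continuous_normSq.comp (by fun_prop)))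
  have hlim := (hF.tendsto _).comp ((tendsto_id.mono_left nhdsWithin_le_nhds).prodMk_nhds hA)
  have hle : 0 ≤ F (0, 2 * A) := by
    refine ge_of_tendsto hlim ?_
    filter_upwards [eventually_mem_Ioo_zero_one] with t ht
    have := schwarzPick_rightHalfPlane_radial hh hre hz ht
    have hB : normSq (t * h z + conj (t * h (1 - t))) =
        t ^ 2 * normSq (h z + conj (h (1 - t))) := by
      rw [map_mul, conj_ofReal, ← mul_add, normSq_mul, normSq_ofReal, sq]
    simp only [Function.comp_apply, id_eq, F, hB, re_ofReal_mul, sub_nonneg]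
    nlinarith [mul_le_mul_of_nonneg_left this ht.1.le]
  have hK := re_one_add_div_one_sub_nonneg hz
  rcases le_or_gt A 0 with hA0 | hA0
  · nlinarith [hre z hz]
  have hN : 0 < normSq (1 - z) := normSq_pos.2 (sub_ne_zero.2 (ne_of_mem_unitDisk hz).symm)
  have hF0 : F (0, 2 * A) = 8 * A * ((h z).re * normSq (1 - z) - A * (1 - normSq z)) := by
    simp [F, normSq_apply]; ring
  rw [hF0] at hle
  rw [re_one_add_div_one_sub, mul_div_assoc', div_le_iff₀ hN]
  nlinarith

theorem eq_zero_of_tendsto_div_radial (hh : DifferentiableOn ℂ h unitDisk)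
    (hre : ∀ z ∈ unitDisk, 0 ≤ (h z).re) (hz : z ∈ unitDisk)
    (hlim : Tendsto (fun t : ℝ => h (1 - t) / t) (𝓝[>] 0) (𝓝 0)) : h z = 0 := by
  -- the radial Schwarz–Pick inequality divided by `t`, as a function of `(t, h (1 - t) / t)`
  set F : ℝ × ℂ → ℝ := fun q => 4 * (h z).re * q.2.re * normSq (1 - (1 - q.1) * z) -
    (2 - q.1) * (1 - normSq z) * normSq (h z + conj (q.1 * q.2))
  have hF : Continuous F := by
    refine .sub (.mul (by fun_prop) (continuous_normSq.comp (by fun_prop)))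
      (.mul (by fun_prop) (continuous_normSq.comp (by fun_prop)))
  have hlim := (hF.tendsto _).comp ((tendsto_id.mono_left nhdsWithin_le_nhds).prodMk_nhds hlim)
  have hle : 0 ≤ F (0, 0) := by
    refine ge_of_tendsto hlim ?_
    filter_upwards [eventually_mem_Ioo_zero_one] with t ht
    have := schwarzPick_rightHalfPlane_radial hh hre hz ht
    have hC : (t : ℂ) * (h (1 - t) / t) = h (1 - t) :=
      mul_div_cancel₀ _ (by exact_mod_cast ht.1.ne')
    have hre' : 4 * (h z).re * (h (1 - t) / t).re * normSq (1 - (1 - t) * z) =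
        4 * (h z).re * (h (1 - t)).re * normSq (1 - (1 - t) * z) / t := by
      rw [div_ofReal_re]; ring
    simp only [Function.comp_apply, id_eq, F, hC, hre', sub_nonneg, le_div_iff₀ ht.1]
    linarith
  have hF0 : F (0, 0) = -(2 * (1 - normSq z) * normSq (h z)) := by simp [F]
  rw [mem_unitDisk_iff_normSq_lt_one] at hz
  rw [hF0, neg_nonneg] at hle
  exact normSq_eq_zero.1 (le_antisymm (by nlinarith [normSq_nonneg (h z)]) (normSq_nonneg _))

end radial

lemma tendsto_one_sub_mul_nhdsWithin_stolzAngle {w : ℂ} (hw : 0 < w.re) :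
    Tendsto (fun t : ℝ => 1 - t * w) (𝓝[>] 0) (𝓝[stolzAngle 1 (4 * ‖w‖ / w.re)] 1) := by
  have hnw : 0 < ‖w‖ := hw.trans_le (re_le_norm w)
  rw [tendsto_nhdsWithin_iff]
  refine ⟨tendsto_nhdsWithin_of_tendsto_nhds (Continuous.tendsto' (by fun_prop) 0 _ (by simp)), ?_⟩
  filter_upwards [Ioo_mem_nhdsGT (div_pos hw (pow_pos hnw 2))] with t ht
  obtain ⟨ht0, htw⟩ := ht
  rw [lt_div_iff₀ (pow_pos hnw 2)] at htw
  have hsq : ‖1 - t * w‖ ^ 2 = 1 - 2 * t * w.re + t ^ 2 * ‖w‖ ^ 2 := by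
    simp only [Complex.sq_norm, normSq_apply, sub_re, sub_im, mul_re, mul_im, ofReal_re,
      ofReal_im, one_re, one_im]
    ring
  have hdist : ‖1 - t * w - 1‖ = t * ‖w‖ := by
    rw [sub_sub_cancel_left, norm_neg, norm_mul, norm_real, Real.norm_of_nonneg ht0.le]
  have hsq_lt : t * w.re < 1 - ‖1 - t * w‖ ^ 2 := by
    nlinarith [mul_lt_mul_of_pos_left htw ht0]
  have hlt : ‖1 - t * w‖ < 1 := by nlinarith [mul_pos ht0 hw, norm_nonneg (1 - t * w)]
  have hgap : t * w.re < 2 * (1 - ‖1 - t * w‖) := by nlinarith [norm_nonneg (1 - t * w)]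
  refine ⟨hlt, ?_⟩
  rw [hdist, div_mul_eq_mul_div, lt_div_iff₀ hw]
  nlinarith [mul_pos ht0 hnw]

lemma AngularLimAt.tendsto_comp_one_sub_mul {g : ℂ → ℂ} {L w : ℂ} (hg : AngularLimAt g 1 L)
    (hw : 0 < w.re) : Tendsto (fun t : ℝ => g (1 - t * w)) (𝓝[>] 0) (𝓝 L) := by
  refine (hg _ ?_).comp (tendsto_one_sub_mul_nhdsWithin_stolzAngle hw)
  rw [lt_div_iff₀ hw]
  linarith [re_le_norm w]

lemma AngularLimAt.tendsto_comp_one_sub {g : ℂ → ℂ} {L : ℂ} (hg : AngularLimAt g 1 L) :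
    Tendsto (fun t : ℝ => g (1 - t)) (𝓝[>] 0) (𝓝 L) := by
  simpa using hg.tendsto_comp_one_sub_mul (w := 1) (by simp)

lemma re_conj_mul_nonneg_of_angularLimAt {p : ℂ → ℂ} {L w : ℂ}
    (hre : ∀ z ∈ unitDisk, 0 ≤ (p z).re) (hL : AngularLimAt (fun z => (1 - z) * p z) 1 L)
    (hw : 0 < w.re) : 0 ≤ (conj w * L).re := by
  have hray := tendsto_one_sub_mul_nhdsWithin_stolzAngle hw
  refine ge_of_tendsto ((continuous_re.tendsto _).comp
    ((hL.tendsto_comp_one_sub_mul hw).const_mul (conj w))) ?_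
  filter_upwards [hray.eventually eventually_mem_nhdsWithin, self_mem_nhdsWithin]
    with t hmem (ht : 0 < t)
  have hmul : conj w * ((1 - (1 - t * w)) * p (1 - t * w)) =
      ((t * normSq w : ℝ) : ℂ) * p (1 - t * w) := by
    rw [ofReal_mul, normSq_eq_conj_mul_self]; ring
  simp only [Function.comp_apply, hmul, re_ofReal_mul]
  exact mul_nonneg (mul_nonneg ht.le (normSq_nonneg w)) (hre _ hmem.1)

theorem im_eq_zero_and_re_nonneg_of_angularLimAt {p : ℂ → ℂ} {L : ℂ}
    (hre : ∀ z ∈ unitDisk, 0 ≤ (p z).re) (hL : AngularLimAt (fun z => (1 - z) * p z) 1 L) :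
    L.im = 0 ∧ 0 ≤ L.re := by
  have h : ∀ s : ℝ, 0 ≤ L.re + s * L.im := fun s => by
    simpa using re_conj_mul_nonneg_of_angularLimAt hre hL (w := 1 + s * I) (by simp)
  refine ⟨?_, by simpa using h 0⟩
  by_contra him
  have := h (-(L.re + 1) / L.im)
  rw [div_mul_cancel₀ _ him] at this
  linarith

lemma angularLimAt_one_sub_mul_of_eq {p γ : ℂ → ℂ} {a b : ℂ}
    (hrep : ∀ z ∈ unitDisk, p z = a * ((1 + z) / (1 - z)) + b + γ z)
    (hγ : AngularLimAt (fun z => γ z / (z - 1)) 1 0) :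
    AngularLimAt (fun z => (1 - z) * p z) 1 (2 * a) := by
  intro k hk
  have hmain : Tendsto (fun z : ℂ => a * (1 + z) + (1 - z) * b) (𝓝[stolzAngle 1 k] 1)
      (𝓝 (2 * a)) :=
    tendsto_nhdsWithin_of_tendsto_nhds (Continuous.tendsto' (by fun_prop) 1 _ (by ring))
  have hsq : Tendsto (fun z : ℂ => (z - 1) ^ 2) (𝓝[stolzAngle 1 k] 1) (𝓝 0) :=
    tendsto_nhdsWithin_of_tendsto_nhds (Continuous.tendsto' (by fun_prop) 1 _ (by ring))
  have hlim := hmain.sub (hsq.mul (hγ k hk))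
  rw [mul_zero, sub_zero] at hlim
  refine hlim.congr' ?_
  filter_upwards [eventually_mem_nhdsWithin] with z hz
  have hz1 : z - 1 ≠ 0 := sub_ne_zero.2 (ne_of_mem_unitDisk hz.1)
  have hz1' : 1 - z ≠ 0 := sub_ne_zero.2 (ne_of_mem_unitDisk hz.1).symm
  rw [hrep z hz.1]
  field_simp
  ring

lemma re_nonneg_and_re_le_of_eq {p : ℂ → ℂ} {A : ℝ} {b : ℂ} (hA : 0 ≤ A)
    (hre : ∀ z ∈ unitDisk, 0 ≤ (p z).re)
    (hrep : ∀ z ∈ unitDisk, p z = A * ((1 + z) / (1 - z)) + b) :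
    0 ≤ b.re ∧ ∀ z ∈ unitDisk, b.re ≤ (p z).re := by
  have hre_p : ∀ z ∈ unitDisk, (p z).re = A * ((1 + z) / (1 - z)).re + b.re := fun z hz => by
    rw [hrep z hz, add_re, re_ofReal_mul]
  refine ⟨?_, fun z hz => ?_⟩
  · -- `Re ((1 + z) / (1 - z)) → 0` as `z → -1`
    have hcont : ContinuousAt (fun z : ℂ => A * ((1 + z) / (1 - z)).re + b.re) (-1) := by
      fun_prop (disch := norm_num)
    have : (𝓝[unitDisk] (-1 : ℂ)).NeBot := mem_closure_iff_nhdsWithin_neBot.1 (by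
      rw [unitDisk_eq_ball, closure_ball _ one_ne_zero]; simp)
    refine ge_of_tendsto (x := 𝓝[unitDisk] (-1 : ℂ)) (tendsto_nhdsWithin_of_tendsto_nhds ?_)
      (eventually_nhdsWithin_of_forall fun z hz => hre_p z hz ▸ hre z hz)
    simpa using hcont.tendsto
  · rw [hre_p z hz]
    nlinarith [re_one_add_div_one_sub_nonneg hz]

theorem eq_zero_of_re_le {p γ : ℂ → ℂ} {A : ℝ} {b : ℂ} (hp : DifferentiableOn ℂ p unitDisk)
    (hrep : ∀ z ∈ unitDisk, p z = A * ((1 + z) / (1 - z)) + b + γ z)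
    (hγ : AngularLimAt (fun z => γ z / (z - 1)) 1 0)
    (hpb : ∀ z ∈ unitDisk, b.re ≤ (p z).re) : ∀ z ∈ unitDisk, γ z = 0 := by
  have hγd : DifferentiableOn ℂ γ unitDisk := by
    have hK : DifferentiableOn ℂ (fun z : ℂ => (1 + z) / (1 - z)) unitDisk :=
      (differentiableOn_id.const_add 1).div (differentiableOn_id.const_sub 1)
        fun z hz => sub_ne_zero.2 (ne_of_mem_unitDisk hz).symm
    refine (hp.sub ((hK.const_mul (A : ℂ)).add_const b)).congr fun z hz => ?_
    simp only [Pi.sub_apply, hrep z hz]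
    ring
  have hJ : Tendsto (fun t : ℝ => t * (p (1 - t) - b)) (𝓝[>] 0) (𝓝 (2 * (A : ℂ))) := by
    have htb : Tendsto (fun t : ℝ => (t : ℂ) * b) (𝓝[>] 0) (𝓝 0) :=
      tendsto_nhdsWithin_of_tendsto_nhds (Continuous.tendsto' (by fun_prop) 0 _ (by simp))
    have := (angularLimAt_one_sub_mul_of_eq hrep hγ).tendsto_comp_one_sub.sub htb
    rw [sub_zero] at this
    exact this.congr fun t => by ring
  intro z hz
  refine eq_zero_of_tendsto_div_radial hγd (fun z hz => ?_) hz ?_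
  · have hjulia := le_re_of_tendsto_mul_radial (hp.sub_const b)
      (fun z hz => by simpa using hpb z hz) hz hJ
    have hγ_re : (γ z).re = (p z - b).re - A * ((1 + z) / (1 - z)).re := by
      rw [hrep z hz]; simp only [sub_re, add_re, re_ofReal_mul]; ring
    rw [hγ_re]
    linarith
  · simpa [sub_sub_cancel_left, div_neg] using hγ.tendsto_comp_one_sub.neg

theorem stmt16 (p : ℂ → ℂ) (hp : DifferentiableOn ℂ p unitDisk)
    (hre : ∀ z ∈ unitDisk, 0 ≤ (p z).re)
    (a b : ℂ) (γ : ℂ → ℂ)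
    (hrep : ∀ z ∈ unitDisk, p z = a * ((1 + z) / (1 - z)) + b + γ z)
    (hγ : AngularLimAt (fun z => γ z / (z - 1)) 1 0) :
    (a.im = 0 ∧ 0 ≤ a.re ∧ AngularLimAt (fun z => (1 - z) * p z) 1 (2 * a)) ∧
    ((∀ z ∈ unitDisk, γ z = 0) ↔ (0 ≤ b.re ∧ ∀ z ∈ unitDisk, b.re ≤ (p z).re)) := by
  have hcharge := angularLimAt_one_sub_mul_of_eq hrep hγ
  obtain ⟨him, hre2⟩ := im_eq_zero_and_re_nonneg_of_angularLimAt hre hcharge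
  have ha_im : a.im = 0 := by simpa using him
  have ha_re : 0 ≤ a.re := by simpa using hre2
  have hrep' : ∀ z ∈ unitDisk, p z = a.re * ((1 + z) / (1 - z)) + b + γ z := by
    rwa [show (a.re : ℂ) = a from ext rfl (by simp [ha_im])]
  refine ⟨⟨ha_im, ha_re, hcharge⟩, fun hγ0 => ?_, fun ⟨_, hpb⟩ => eq_zero_of_re_le hp hrep' hγ hpb⟩
  exact re_nonneg_and_re_le_of_eq ha_re hre fun z hz => by rw [hrep' z hz, hγ0 z hz, add_zero]
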